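/- arXiv:0907.2947 — 2 statements merged into one kernel-verified Lean document; each statement's English description precedes it below -/
import Mathlib

section
/- Suppose there exists 0 < η ≤ 1 such that for every cube Q there is E_Q ⊂ Q with w(E_Q) > η w(Q) and Q∖E_Q = ⋃_j Q_j a union of non-overlapping dyadic subcubes of Q. Let E_Q* = R_Q ∖ ⋃_j R_{Q_j} where R_Q = Q × (0, ℓ(Q)). If a measure μ on ℝⁿ × (0,∞) satisfies μ(E_Q*) ≤ C₁ w(Q) for all cubes Q, then μ(R_Q) ≤ (C₁/η) w(Q) for all cubes Q; i.e., μ is a w-Carleson measure. -/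
/-!
Write `F_N(Q) = μ(R_Q ∩ {t > ℓ(Q)/2^N})`. The bad cubes `Q_j` are proper dyadic subcubes, so
`ℓ(Q_j) ≤ ℓ(Q)/2`, and the part of `R_Q` above height `ℓ(Q)/2^(N+1)` lies in `E_Q*` together
with the parts of the `R_{Q_j}` above height `ℓ(Q_j)/2^N`. Hence
`F_{N+1}(Q) ≤ C₁ w(Q) + ∑ F_N(Q_j)`, while `∑ w(Q_j) ≤ w(Q ∖ E_Q) ≤ (1 - η) w(Q)` because the
`Q_j` have disjoint interiors and null boundaries. By induction
`F_N(Q) ≤ C₁ ∑_{i<N} (1 - η)^i w(Q) ≤ (C₁/η) w(Q)`, and `F_N(Q)` increases to `μ(R_Q)`.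
-/

open MeasureTheory

/-- The axis-parallel cube with corner `c` and side length `l`. -/
def Cube (n : ℕ) (c : Fin n → ℝ) (l : ℝ) : Set (EuclideanSpace ℝ (Fin n)) :=
  {y | ∀ i, c i ≤ y i ∧ y i ≤ c i + l}

/-- The Carleson box `R_Q = Q × (0, ℓ(Q))` over the cube `Q`. -/
def CarlesonBox (n : ℕ) (c : Fin n → ℝ) (l : ℝ) : Set (EuclideanSpace ℝ (Fin n) × ℝ) :=
  Cube n c l ×ˢ Set.Ioo (0:ℝ) l

open Set
open scoped ENNReal

section Iteration

variable {ι : Type*} {P : ι → Prop} {F : ℕ → ι → ℝ≥0∞} {W : ι → ℝ≥0∞} {C r : ℝ≥0∞}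

theorem le_mul_geom_sum_of_sawtooth (hF₀ : ∀ Q, F 0 Q = 0)
    (hstep : ∀ Q, P Q → ∃ (J : Set ℕ) (q : ℕ → ι), (∀ j ∈ J, P (q j)) ∧
      ∑' j : J, W (q j) ≤ r * W Q ∧ ∀ N, F (N + 1) Q ≤ C * W Q + ∑' j : J, F N (q j))
    (N : ℕ) {Q : ι} (hQ : P Q) : F N Q ≤ C * (∑ i ∈ Finset.range N, r ^ i) * W Q := by
  induction N generalizing Q with
  | zero => simp [hF₀]
  | succ N ih =>
    obtain ⟨J, q, hqP, hW, hF⟩ := hstep Q hQ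
    calc F (N + 1) Q ≤ C * W Q + ∑' j : J, F N (q j) := hF N
      _ ≤ C * W Q + ∑' j : J, C * (∑ i ∈ Finset.range N, r ^ i) * W (q j) := by
          gcongr with j
          exact ih (hqP j j.2)
      _ = C * W Q + C * (∑ i ∈ Finset.range N, r ^ i) * ∑' j : J, W (q j) := by
          rw [ENNReal.tsum_mul_left]
      _ ≤ C * W Q + C * (∑ i ∈ Finset.range N, r ^ i) * (r * W Q) := by gcongr
      _ = C * (∑ i ∈ Finset.range (N + 1), r ^ i) * W Q := by rw [geom_sum_succ]; ring

theorem le_mul_inv_one_sub_of_sawtooth (hF₀ : ∀ Q, F 0 Q = 0)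
    (hstep : ∀ Q, P Q → ∃ (J : Set ℕ) (q : ℕ → ι), (∀ j ∈ J, P (q j)) ∧
      ∑' j : J, W (q j) ≤ r * W Q ∧ ∀ N, F (N + 1) Q ≤ C * W Q + ∑' j : J, F N (q j))
    (N : ℕ) {Q : ι} (hQ : P Q) : F N Q ≤ C * (1 - r)⁻¹ * W Q := by
  refine (le_mul_geom_sum_of_sawtooth hF₀ hstep N hQ).trans ?_
  rw [← ENNReal.tsum_geometric]
  gcongr
  exact ENNReal.sum_le_tsum _

end Iteration

section Cube

variable {n : ℕ}

theorem cube_eq_preimage_pi (c : Fin n → ℝ) (l : ℝ) :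
    Cube n c l = EuclideanSpace.equiv (Fin n) ℝ ⁻¹' univ.pi fun i => Icc (c i) (c i + l) := by
  ext y
  simp only [Cube, mem_ofPred_eq, mem_preimage, mem_pi, mem_univ, mem_Icc, forall_const]
  rfl

theorem isCompact_cube (c : Fin n → ℝ) (l : ℝ) : IsCompact (Cube n c l) := by
  rw [cube_eq_preimage_pi, ← ContinuousLinearEquiv.image_symm_eq_preimage]
  exact (isCompact_univ_pi fun i => isCompact_Icc).image (ContinuousLinearEquiv.continuous _)

theorem measurableSet_cube (c : Fin n → ℝ) (l : ℝ) : MeasurableSet (Cube n c l) :=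
  (isCompact_cube c l).isClosed.measurableSet

theorem convex_cube (c : Fin n → ℝ) (l : ℝ) : Convex ℝ (Cube n c l) := by
  rw [cube_eq_preimage_pi]
  exact (convex_pi fun i _ => convex_Icc _ _).linear_preimage
    (EuclideanSpace.equiv (Fin n) ℝ).toLinearEquiv.toLinearMap

theorem measure_interior_cube {ν : Measure (EuclideanSpace ℝ (Fin n))} (hν : ν ≪ volume)
    (c : Fin n → ℝ) (l : ℝ) : ν (interior (Cube n c l)) = ν (Cube n c l) :=
  measure_interior_of_null_frontier (hν ((convex_cube c l).addHaar_frontier volume))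

theorem eq_of_cube_subset_cube {c c' : Fin n → ℝ} {l : ℝ} (hl : 0 ≤ l)
    (h : Cube n c' l ⊆ Cube n c l) : c' = c := by
  have hlow : WithLp.toLp 2 c' ∈ Cube n c l := h fun i => ⟨le_rfl, by simpa using hl⟩
  have hhigh : WithLp.toLp 2 (c' + fun _ => l) ∈ Cube n c l :=
    h fun i => ⟨by simpa using hl, le_rfl⟩
  funext i
  have hc : c i ≤ c' i := (hlow i).1
  have hc' : c' i + l ≤ c i + l := (hhigh i).2
  linarith

theorem le_half_of_dyadic_subset_diff {c c' : Fin n → ℝ} {l : ℝ} {k : ℕ}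
    {E : Set (EuclideanSpace ℝ (Fin n))} (hl : 0 < l) (hE : E.Nonempty) (hEQ : E ⊆ Cube n c l)
    (h : Cube n c' (l / 2 ^ k) ⊆ Cube n c l \ E) : l / 2 ^ k ≤ l / 2 := by
  rcases k with _ | k
  · obtain ⟨x, hx⟩ := hE
    simp only [pow_zero, div_one] at h
    rw [eq_of_cube_subset_cube hl.le (h.trans sdiff_subset)] at h
    exact absurd hx (h (hEQ hx)).2
  · gcongr
    exact le_self_pow₀ one_le_two k.succ_ne_zero

theorem tsum_measure_cube_le {ν : Measure (EuclideanSpace ℝ (Fin n))} (hν : ν ≪ volume)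
    {J : Set ℕ} {qc : ℕ → Fin n → ℝ} {ql : ℕ → ℝ} {s : Set (EuclideanSpace ℝ (Fin n))}
    (hsub : ∀ j ∈ J, Cube n (qc j) (ql j) ⊆ s)
    (hdisj : ∀ j ∈ J, ∀ j' ∈ J, j ≠ j' →
      interior (Cube n (qc j) (ql j)) ∩ interior (Cube n (qc j') (ql j')) = ∅) :
    ∑' j : J, ν (Cube n (qc j) (ql j)) ≤ ν s :=
  calc ∑' j : J, ν (Cube n (qc j) (ql j))
      = ∑' j : J, ν (interior (Cube n (qc j) (ql j))) := by
        simp only [measure_interior_cube hν]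
    _ = ν (⋃ j ∈ J, interior (Cube n (qc j) (ql j))) :=
        (measure_biUnion J.to_countable
          (fun j hj j' hj' hne => disjoint_iff_inter_eq_empty.2 (hdisj j hj j' hj' hne))
          fun _ _ => isOpen_interior.measurableSet).symm
    _ ≤ ν s := measure_mono (iUnion₂_subset fun j hj => interior_subset.trans (hsub j hj))

end Cube

section CarlesonBox

def truncCarlesonBox (n : ℕ) (c : Fin n → ℝ) (l : ℝ) (N : ℕ) :
    Set (EuclideanSpace ℝ (Fin n) × ℝ) :=
  CarlesonBox n c l ∩ {p | l / 2 ^ N < p.2}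

variable {n : ℕ}

theorem truncCarlesonBox_zero (c : Fin n → ℝ) (l : ℝ) : truncCarlesonBox n c l 0 = ∅ :=
  eq_empty_of_forall_notMem fun p ⟨hp, hpl⟩ => by
    simp only [pow_zero, div_one, mem_ofPred_eq] at hpl
    exact hpl.not_gt hp.2.2

theorem monotone_truncCarlesonBox (c : Fin n → ℝ) {l : ℝ} (hl : 0 ≤ l) :
    Monotone (truncCarlesonBox n c l) := fun _ _ hNM _ ⟨hp, hpl⟩ =>
  ⟨hp, lt_of_le_of_lt (div_le_div_of_nonneg_left hl (by positivity)
    (pow_le_pow_right₀ one_le_two hNM)) hpl⟩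

theorem iUnion_truncCarlesonBox (c : Fin n → ℝ) (l : ℝ) :
    ⋃ N, truncCarlesonBox n c l N = CarlesonBox n c l := by
  refine subset_antisymm (iUnion_subset fun N => inter_subset_left) fun p hp => ?_
  have hl : 0 < l := hp.2.1.trans hp.2.2
  obtain ⟨N, hN⟩ := exists_pow_lt_of_lt_one (div_pos hp.2.1 hl) (by norm_num : (1 / 2 : ℝ) < 1)
  refine mem_iUnion.2 ⟨N, hp, ?_⟩
  calc l / 2 ^ N = (1 / 2) ^ N * l := by rw [div_pow, one_pow]; ring
    _ < p.2 / l * l := by gcongr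
    _ = p.2 := div_mul_cancel₀ _ hl.ne'

theorem truncCarlesonBox_succ_subset {c : Fin n → ℝ} {l : ℝ} {J : Set ℕ} {qc : ℕ → Fin n → ℝ}
    {ql : ℕ → ℝ} (hJ : ∀ j ∈ J, ql j ≤ l / 2) (N : ℕ) :
    truncCarlesonBox n c l (N + 1) ⊆ (CarlesonBox n c l \ ⋃ j ∈ J, CarlesonBox n (qc j) (ql j)) ∪
      ⋃ j ∈ J, truncCarlesonBox n (qc j) (ql j) N := by
  rintro p ⟨hp, hpl : l / 2 ^ (N + 1) < p.2⟩
  by_cases hU : p ∈ ⋃ j ∈ J, CarlesonBox n (qc j) (ql j)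
  · obtain ⟨j, hj, hpj⟩ := mem_iUnion₂.1 hU
    refine Or.inr (mem_iUnion₂.2 ⟨j, hj, hpj, lt_of_le_of_lt ?_ hpl⟩)
    calc ql j / 2 ^ N ≤ l / 2 / 2 ^ N := by gcongr; exact hJ j hj
      _ = l / 2 ^ (N + 1) := by ring
  · exact Or.inl ⟨hp, hU⟩

theorem measure_truncCarlesonBox_succ_le (μ : Measure (EuclideanSpace ℝ (Fin n) × ℝ))
    {c : Fin n → ℝ} {l : ℝ} {J : Set ℕ} {qc : ℕ → Fin n → ℝ}
    {ql : ℕ → ℝ} (hJ : ∀ j ∈ J, ql j ≤ l / 2) (N : ℕ) :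
    μ (truncCarlesonBox n c l (N + 1)) ≤
      μ (CarlesonBox n c l \ ⋃ j ∈ J, CarlesonBox n (qc j) (ql j)) +
        ∑' j : J, μ (truncCarlesonBox n (qc j) (ql j) N) :=
  calc μ (truncCarlesonBox n c l (N + 1))
      ≤ μ ((CarlesonBox n c l \ ⋃ j ∈ J, CarlesonBox n (qc j) (ql j)) ∪
          ⋃ j ∈ J, truncCarlesonBox n (qc j) (ql j) N) :=
        measure_mono (truncCarlesonBox_succ_subset hJ N)
    _ ≤ _ := (measure_union_le _ _).trans (by gcongr; exact measure_biUnion_le μ J.to_countable _)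

end CarlesonBox

section Weight

variable {α : Type*} [MeasurableSpace α] {μ : Measure α} {w : α → ℝ} {s E : Set α}

theorem withDensity_ofReal_apply_eq_integral (hw : ∀ x, 0 ≤ w x) (hs : MeasurableSet s)
    (hi : IntegrableOn w s μ) :
    μ.withDensity (fun x => ENNReal.ofReal (w x)) s = ENNReal.ofReal (∫ x in s, w x ∂μ) := by
  rw [withDensity_apply _ hs,
    ofReal_integral_eq_lintegral_ofReal hi (Filter.Eventually.of_forall hw)]

theorem withDensity_ofReal_diff_le {η : ℝ} (hw : ∀ x, 0 ≤ w x) (hs : MeasurableSet s)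
    (hi : IntegrableOn w s μ) (hE : MeasurableSet E) (hEs : E ⊆ s)
    (hEw : η * ∫ x in s, w x ∂μ ≤ ∫ x in E, w x ∂μ) :
    μ.withDensity (fun x => ENNReal.ofReal (w x)) (s \ E) ≤
      ENNReal.ofReal (1 - η) * μ.withDensity (fun x => ENNReal.ofReal (w x)) s := by
  have hsplit : ∫ x in s, w x ∂μ = (∫ x in E, w x ∂μ) + ∫ x in s \ E, w x ∂μ := by
    rw [← setIntegral_union disjoint_sdiff_right (hs.diff hE) (hi.mono_set hEs)
      (hi.mono_set sdiff_subset), union_sdiff_cancel hEs]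
  rw [withDensity_ofReal_apply_eq_integral hw (hs.diff hE) (hi.mono_set sdiff_subset),
    withDensity_ofReal_apply_eq_integral hw hs hi,
    ← ENNReal.ofReal_mul' (setIntegral_nonneg hs fun x _ => hw x)]
  exact ENNReal.ofReal_le_ofReal (by linarith)

end Weight

theorem sawtooth_step_of_decomposition {n : ℕ} {w : EuclideanSpace ℝ (Fin n) → ℝ}
    (hw : ∀ x, 0 ≤ w x)
    (hwi : LocallyIntegrable w volume) {μ : Measure (EuclideanSpace ℝ (Fin n) × ℝ)}
    {η C₁ : ℝ} (hη : 0 ≤ η) {c : Fin n → ℝ} {l : ℝ} (hl : 0 < l)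
    {E : Set (EuclideanSpace ℝ (Fin n))} {J : Set ℕ} {qc : ℕ → Fin n → ℝ} {ql : ℕ → ℝ}
    (hEQ : E ⊆ Cube n c l) (hEm : MeasurableSet E)
    (hEw : η * (∫ x in Cube n c l, w x) < ∫ x in E, w x)
    (hQE : Cube n c l \ E = ⋃ j ∈ J, Cube n (qc j) (ql j))
    (hdyad : ∀ j ∈ J, ∃ k : ℕ, ql j = l / 2 ^ k)
    (hdisj : ∀ j ∈ J, ∀ j' ∈ J, j ≠ j' →
      interior (Cube n (qc j) (ql j)) ∩ interior (Cube n (qc j') (ql j')) = ∅)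
    (hμE : μ (CarlesonBox n c l \ ⋃ j ∈ J, CarlesonBox n (qc j) (ql j)) ≤
      ENNReal.ofReal (C₁ * ∫ x in Cube n c l, w x)) :
    (∀ j ∈ J, 0 < ql j) ∧
    ∑' j : J, volume.withDensity (fun x => ENNReal.ofReal (w x)) (Cube n (qc j) (ql j)) ≤
      ENNReal.ofReal (1 - η) * volume.withDensity (fun x => ENNReal.ofReal (w x)) (Cube n c l) ∧
    ∀ N, μ (truncCarlesonBox n c l (N + 1)) ≤
      ENNReal.ofReal C₁ * volume.withDensity (fun x => ENNReal.ofReal (w x)) (Cube n c l) +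
        ∑' j : J, μ (truncCarlesonBox n (qc j) (ql j) N) := by
  have hQm := measurableSet_cube c l
  have hwQ : IntegrableOn w (Cube n c l) := hwi.integrableOn_isCompact (isCompact_cube c l)
  have hsub : ∀ j ∈ J, Cube n (qc j) (ql j) ⊆ Cube n c l \ E := fun j hj =>
    hQE ▸ subset_biUnion_of_mem (u := fun j => Cube n (qc j) (ql j)) hj
  have hEne : E.Nonempty := by
    refine nonempty_iff_ne_empty.2 fun hE => ?_
    rw [hE, Measure.restrict_empty, integral_zero_measure] at hEw
    exact hEw.not_ge (mul_nonneg hη (setIntegral_nonneg hQm fun x _ => hw x))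
  have hhalf : ∀ j ∈ J, ql j ≤ l / 2 := fun j hj => by
    obtain ⟨k, hk⟩ := hdyad j hj
    exact hk ▸ le_half_of_dyadic_subset_diff hl hEne hEQ (hk ▸ hsub j hj)
  refine ⟨fun j hj => ?_, ?_,
    fun N => (measure_truncCarlesonBox_succ_le μ (qc := qc) hhalf N).trans ?_⟩
  · obtain ⟨k, hk⟩ := hdyad j hj
    exact hk ▸ by positivity
  · exact (tsum_measure_cube_le (withDensity_absolutelyContinuous _ _) hsub hdisj).trans
      (withDensity_ofReal_diff_le hw hQm hwQ hEm hEQ hEw.le)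
  · rw [withDensity_ofReal_apply_eq_integral hw hQm hwQ,
      ← ENNReal.ofReal_mul' (setIntegral_nonneg hQm fun x _ => hw x)]
    gcongr

theorem stmt11_general (n : ℕ) (w : EuclideanSpace ℝ (Fin n) → ℝ)
    (hw : ∀ x, 0 < w x) (hwi : LocallyIntegrable w volume)
    (μ : Measure (EuclideanSpace ℝ (Fin n) × ℝ)) (η C₁ : ℝ)
    (hη : 0 < η) (hη1 : η ≤ 1)
    (H : ∀ (c : Fin n → ℝ) (l : ℝ), 0 < l →
      ∃ (E : Set (EuclideanSpace ℝ (Fin n))) (J : Set ℕ)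
        (qc : ℕ → Fin n → ℝ) (ql : ℕ → ℝ),
        E ⊆ Cube n c l ∧ MeasurableSet E ∧
        η * (∫ x in Cube n c l, w x) < ∫ x in E, w x ∧
        Cube n c l \ E = ⋃ j ∈ J, Cube n (qc j) (ql j) ∧
        (∀ j ∈ J, ∃ k : ℕ, ql j = l / 2 ^ k ∧
          ∃ m : Fin n → ℕ, ∀ i, qc j i = c i + m i * (l / 2 ^ k)) ∧
        (∀ j ∈ J, ∀ j' ∈ J, j ≠ j' →
          interior (Cube n (qc j) (ql j)) ∩ interior (Cube n (qc j') (ql j')) = ∅) ∧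
        μ (CarlesonBox n c l \ ⋃ j ∈ J, CarlesonBox n (qc j) (ql j)) ≤
          ENNReal.ofReal (C₁ * ∫ x in Cube n c l, w x)) :
    ∀ (c : Fin n → ℝ) (l : ℝ), 0 < l →
      μ (CarlesonBox n c l) ≤ ENNReal.ofReal ((C₁ / η) * ∫ x in Cube n c l, w x) := by
  intro c l hl
  have hw₀ : ∀ x, 0 ≤ w x := fun x => (hw x).le
  set ν := volume.withDensity fun x => ENNReal.ofReal (w x)
  have hiter := le_mul_inv_one_sub_of_sawtooth (P := fun Q : (Fin n → ℝ) × ℝ => 0 < Q.2)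
    (F := fun N Q => μ (truncCarlesonBox n Q.1 Q.2 N)) (W := fun Q => ν (Cube n Q.1 Q.2))
    (C := ENNReal.ofReal C₁) (r := ENNReal.ofReal (1 - η))
    (fun Q => by simp only [truncCarlesonBox_zero, measure_empty]) fun Q hQ => by
      obtain ⟨E, J, qc, ql, hEQ, hEm, hEw, hQE, hdyad, hdisj, hμE⟩ := H Q.1 Q.2 hQ
      exact ⟨J, fun j => (qc j, ql j), sawtooth_step_of_decomposition hw₀ hwi hη.le hQ hEQ hEm
        hEw hQE (fun j hj => (hdyad j hj).imp fun _ => And.left) hdisj hμE⟩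
  have hν : ν (Cube n c l) = ENNReal.ofReal (∫ x in Cube n c l, w x) :=
    withDensity_ofReal_apply_eq_integral hw₀ (measurableSet_cube c l)
      (hwi.integrableOn_isCompact (isCompact_cube c l))
  have hr : 1 - ENNReal.ofReal (1 - η) = ENNReal.ofReal η := by
    rw [← ENNReal.ofReal_one, ← ENNReal.ofReal_sub _ (by linarith), sub_sub_cancel]
  rw [← iUnion_truncCarlesonBox, (monotone_truncCarlesonBox c hl.le).measure_iUnion]
  refine iSup_le fun N => (hiter N (Q := (c, l)) hl).trans_eq ?_
  rw [hr, hν, ENNReal.ofReal_mul' (setIntegral_nonneg (measurableSet_cube c l) fun x _ => hw₀ x),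
    ENNReal.ofReal_div_of_pos hη, div_eq_mul_inv]

/-- Sawtooth criterion for Carleson measures: if for every cube `Q` there is `E_Q ⊆ Q` with
`w(E_Q) > η w(Q)` whose complement `Q ∖ E_Q` is a union of non-overlapping dyadic subcubes
`Q_j` of `Q`, and `μ(E_Q*) ≤ C₁ w(Q)` where `E_Q* = R_Q ∖ ⋃ R_{Q_j}`, then
`μ(R_Q) ≤ (C₁/η) w(Q)` for all `Q`, i.e. `μ` is a `w`-Carleson measure. -/
theorem stmt11 (n : ℕ) (hn : 0 < n) (w : EuclideanSpace ℝ (Fin n) → ℝ)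
    (hw : ∀ x, 0 < w x) (hwi : LocallyIntegrable w volume)
    (μ : Measure (EuclideanSpace ℝ (Fin n) × ℝ)) (η C₁ : ℝ)
    (hη : 0 < η) (hη1 : η ≤ 1) (hC₁ : 0 ≤ C₁)
    (H : ∀ (c : Fin n → ℝ) (l : ℝ), 0 < l →
      ∃ (E : Set (EuclideanSpace ℝ (Fin n))) (J : Set ℕ)
        (qc : ℕ → Fin n → ℝ) (ql : ℕ → ℝ),
        E ⊆ Cube n c l ∧ MeasurableSet E ∧
        η * (∫ x in Cube n c l, w x) < ∫ x in E, w x ∧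
        Cube n c l \ E = ⋃ j ∈ J, Cube n (qc j) (ql j) ∧
        (∀ j ∈ J, ∃ k : ℕ, ql j = l / 2 ^ k ∧
          ∃ m : Fin n → ℕ, ∀ i, qc j i = c i + m i * (l / 2 ^ k)) ∧
        (∀ j ∈ J, ∀ j' ∈ J, j ≠ j' →
          interior (Cube n (qc j) (ql j)) ∩ interior (Cube n (qc j') (ql j')) = ∅) ∧
        μ (CarlesonBox n c l \ ⋃ j ∈ J, CarlesonBox n (qc j) (ql j)) ≤
          ENNReal.ofReal (C₁ * ∫ x in Cube n c l, w x)) :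
    ∀ (c : Fin n → ℝ) (l : ℝ), 0 < l →
      μ (CarlesonBox n c l) ≤ ENNReal.ofReal ((C₁ / η) * ∫ x in Cube n c l, w x) :=
  stmt11_general n w hw hwi μ η C₁ hη hη1 H
end

section
/- Let ν ∈ ℂⁿ with |ν| = 1, 0 < ε ≤ 1/16, and let z, a ∈ ℂⁿ satisfy z ∈ Γ_ν = {z : |z − ν(z·ν̄)| < ε|z·ν̄|}, Re(ν·a) > 3/4, and |a| ≤ 1/(8ε). Then |z·a| ≥ (5/8)|z·ν̄| ≥ (1/2)|z|. -/
/-!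
Write `z = w • ν + r` with `w = ⟪ν, z⟫` and `‖r‖ < ε‖w‖`. The bilinear pairing with `a` is
`w (ν·a) + r·a`; the main term has size at least `(3/4)‖w‖` and the error at most
`‖r‖‖a‖ ≤ ‖w‖/8`. Likewise `‖z‖ ≤ (1 + ε)‖w‖`.
-/

open Matrix

theorem EuclideanSpace.norm_dotProduct_le {𝕜 ι : Type*} [RCLike 𝕜] [Fintype ι]
    (u v : EuclideanSpace 𝕜 ι) : ‖u.ofLp ⬝ᵥ v.ofLp‖ ≤ ‖u‖ * ‖v‖ := by
  have hstar : ‖WithLp.toLp 2 (star u.ofLp)‖ = ‖u‖ := by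
    simp [EuclideanSpace.norm_eq]
  calc ‖u.ofLp ⬝ᵥ v.ofLp‖ = ‖inner 𝕜 (WithLp.toLp 2 (star u.ofLp)) v‖ := by
        rw [EuclideanSpace.inner_toLp_toLp, star_star, dotProduct_comm]
    _ ≤ ‖u‖ * ‖v‖ := hstar ▸ norm_inner_le_norm _ _

theorem EuclideanSpace.le_norm_dotProduct_of_sub_smul {𝕜 ι : Type*} [RCLike 𝕜] [Fintype ι]
    (z ν a : EuclideanSpace 𝕜 ι) (w : 𝕜) :
    ‖w‖ * ‖ν.ofLp ⬝ᵥ a.ofLp‖ - ‖z - w • ν‖ * ‖a‖ ≤ ‖z.ofLp ⬝ᵥ a.ofLp‖ := by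
  have hsplit : w * (ν.ofLp ⬝ᵥ a.ofLp) = z.ofLp ⬝ᵥ a.ofLp - (z - w • ν).ofLp ⬝ᵥ a.ofLp := by
    simp [sub_dotProduct, smul_dotProduct]
  calc ‖w‖ * ‖ν.ofLp ⬝ᵥ a.ofLp‖ - ‖z - w • ν‖ * ‖a‖
      ≤ ‖z.ofLp ⬝ᵥ a.ofLp‖ + ‖(z - w • ν).ofLp ⬝ᵥ a.ofLp‖ - ‖z - w • ν‖ * ‖a‖ := by
        rw [← norm_mul, hsplit]
        gcongr
        exact norm_sub_le _ _
    _ ≤ ‖z.ofLp ⬝ᵥ a.ofLp‖ := by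
        linarith [norm_dotProduct_le (z - w • ν) a]

/-- Cone estimate: if `|ν| = 1`, `0 < ε ≤ 1/16`, `z ∈ Γ_ν` (the `ε`-cone around `ν`),
`Re(ν·a) > 3/4` and `|a| ≤ 1/(8ε)`, then `|z·a| ≥ (5/8)|z·ν̄| ≥ (1/2)|z|`.
Here `z·ν̄ = ⟪ν, z⟫` is the Hermitian pairing and `z·a = ∑ zᵢ aᵢ` the bilinear pairing. -/
theorem stmt13 (n : ℕ) (ν z a : EuclideanSpace ℂ (Fin n)) (ε : ℝ)
    (hν : ‖ν‖ = 1) (hε : 0 < ε) (hε' : ε ≤ 1 / 16)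
    (hz : ‖z - (inner ℂ ν z : ℂ) • ν‖ < ε * ‖(inner ℂ ν z : ℂ)‖)
    (ha : 3 / 4 < (∑ i, ν i * a i).re)
    (haa : ‖a‖ ≤ 1 / (8 * ε)) :
    5 / 8 * ‖(inner ℂ ν z : ℂ)‖ ≤ ‖∑ i, z i * a i‖ ∧
    1 / 2 * ‖z‖ ≤ 5 / 8 * ‖(inner ℂ ν z : ℂ)‖ := by
  set w : ℂ := inner ℂ ν z
  have hνa : 3 / 4 ≤ ‖ν.ofLp ⬝ᵥ a.ofLp‖ := ha.le.trans (Complex.re_le_norm _)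
  have herr : ‖z - w • ν‖ * ‖a‖ ≤ ‖w‖ / 8 :=
    calc ‖z - w • ν‖ * ‖a‖ ≤ ε * ‖w‖ * (1 / (8 * ε)) := by gcongr
      _ = ‖w‖ / 8 := by field_simp
  have hz_norm : ‖z‖ ≤ (1 + ε) * ‖w‖ :=
    calc ‖z‖ ≤ ‖w • ν‖ + ‖z - w • ν‖ := norm_le_norm_add_norm_sub' _ _
      _ ≤ ‖w‖ + ε * ‖w‖ := by rw [norm_smul, hν, mul_one]; gcongr
      _ = (1 + ε) * ‖w‖ := by ring
  constructor
  · calc 5 / 8 * ‖w‖ = ‖w‖ * (3 / 4) - ‖w‖ / 8 := by ring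
      _ ≤ ‖w‖ * ‖ν.ofLp ⬝ᵥ a.ofLp‖ - ‖z - w • ν‖ * ‖a‖ := by gcongr
      _ ≤ ‖z.ofLp ⬝ᵥ a.ofLp‖ := EuclideanSpace.le_norm_dotProduct_of_sub_smul z ν a w
  · nlinarith [norm_nonneg w]
end
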